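/- arXiv:1409.2102 — 4 statements merged into one kernel-verified Lean document; each statement's English description precedes it below -/
import Mathlib

section
/- Let Φ : 𝕊¹ → ℝ² be a smooth entropy, i.e. (d/dθ)[Φ(e^{iθ})] · e^{iθ} = 0 for every θ. Let η : [0,∞) → ℝ be smooth with η = 0 on [0, 1/2] ∪ [2, ∞) and η(1) = 1, and define Φ̃ : ℝ² → ℝ² by Φ̃(z) = η(|z|)·Φ(z/|z|) for z ≠ 0 and Φ̃(0) = 0. Then Φ̃ is smooth with compact support and satisfies z · (DΦ̃(z) z^⊥) = 0 for every z ∈ ℝ², where DΦ̃(z) is the Jacobian matrix of Φ̃ at z and (a,b)^⊥ = (−b,a). -/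
open MeasureTheory Real Set Metric Filter
open scoped RealInnerProductSpace Topology ENNReal NNReal

noncomputable section

/-- The Euclidean plane `ℝ²`. -/
abbrev E2 := EuclideanSpace ℝ (Fin 2)

/-- Constructor for points of `ℝ²`. -/
def mk2 (a b : ℝ) : E2 := (WithLp.equiv 2 (Fin 2 → ℝ)).symm ![a, b]

/-- `(a,b)^⊥ = (-b,a)`. -/
def perp (z : E2) : E2 := mk2 (-(z 1)) (z 0)

/-- The point `e^{iθ} = (cos θ, sin θ)` of the unit circle. -/
def sc (θ : ℝ) : E2 := mk2 (Real.cos θ) (Real.sin θ)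

/-- A smooth compactly supported test function with support contained in `Ω`. -/
def IsTestOn (Ω : Set E2) (ζ : E2 → ℝ) : Prop :=
  ContDiff ℝ (⊤ : ℕ∞) ζ ∧ HasCompactSupport ζ ∧ tsupport ζ ⊆ Ω

/-- `u` is divergence-free in the sense of distributions on `Ω`:
`∫_Ω u · ∇ζ = 0` for all test functions `ζ` supported in `Ω`. -/
def DivFreeOn (Ω : Set E2) (u : E2 → E2) : Prop :=
  ∀ ζ : E2 → ℝ, IsTestOn Ω ζ → ∫ x in Ω, ⟪u x, gradient ζ x⟫ = 0

/-- The Gagliardo `W^{1/p,p}` condition on every ball compactly contained in `Ω`: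
`∫_{B×B} |u(x)-u(y)|^p / |x-y|^3 dx dy < ∞`. -/
def GagliardoLoc (p : ℝ) (Ω : Set E2) (u : E2 → E2) : Prop :=
  ∀ (c : E2) (r : ℝ), 0 < r → closure (ball c r) ⊆ Ω →
    ∫⁻ x in ball c r, ∫⁻ y in ball c r,
      ENNReal.ofReal (‖u x - u y‖ ^ p / ‖x - y‖ ^ 3) < ⊤


lemma mk2_apply0 (a b : ℝ) : mk2 a b 0 = a := by simp [mk2]
lemma mk2_apply1 (a b : ℝ) : mk2 a b 1 = b := by simp [mk2]

lemma e2_ext {x y : E2} (h0 : x 0 = y 0) (h1 : x 1 = y 1) : x = y := by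
  ext i; fin_cases i <;> assumption

lemma inner2 (x y : E2) : ⟪x, y⟫ = x 0 * y 0 + x 1 * y 1 := by
  simp [PiLp.inner_apply, Fin.sum_univ_two]; ring

lemma normsq2 (x : E2) : ‖x‖ ^ 2 = x 0 ^ 2 + x 1 ^ 2 := by
  rw [← real_inner_self_eq_norm_sq, inner2]; ring

lemma sc_apply0 (θ : ℝ) : sc θ 0 = Real.cos θ := mk2_apply0 _ _
lemma sc_apply1 (θ : ℝ) : sc θ 1 = Real.sin θ := mk2_apply1 _ _

lemma norm_sc (θ : ℝ) : ‖sc θ‖ = 1 := by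
  have h : ‖sc θ‖ ^ 2 = 1 := by
    rw [normsq2, sc_apply0, sc_apply1]; exact Real.cos_sq_add_sin_sq θ
  nlinarith [norm_nonneg (sc θ)]

lemma perp_apply0 (z : E2) : perp z 0 = -(z 1) := mk2_apply0 _ _
lemma perp_apply1 (z : E2) : perp z 1 = z 0 := mk2_apply1 _ _

lemma perp_zero : perp (0 : E2) = 0 := by
  apply e2_ext <;> simp [perp_apply0, perp_apply1]

lemma perp_smul (c : ℝ) (z : E2) : perp (c • z) = c • perp z := by
  apply e2_ext <;>
    simp [perp_apply0, perp_apply1, PiLp.smul_apply, smul_eq_mul, mul_comm]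

lemma inner_perp_self (z : E2) : ⟪perp z, z⟫ = 0 := by
  rw [inner2, perp_apply0, perp_apply1]; ring

lemma sc_surj (u : E2) (hu : ‖u‖ = 1) : ∃ θ : ℝ, sc θ = u := by
  have h : u 0 ^ 2 + u 1 ^ 2 = 1 := by rw [← normsq2, hu]; norm_num
  have h0 : -1 ≤ u 0 := by nlinarith
  have h0' : u 0 ≤ 1 := by nlinarith
  rcases le_or_gt 0 (u 1) with hb | hb
  · refine ⟨Real.arccos (u 0), e2_ext ?_ ?_⟩
    · rw [sc_apply0, Real.cos_arccos h0 h0']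
    · rw [sc_apply1, Real.sin_arccos,
        show (1 : ℝ) - u 0 ^ 2 = u 1 ^ 2 by linarith, Real.sqrt_sq hb]
  · refine ⟨-Real.arccos (u 0), e2_ext ?_ ?_⟩
    · rw [sc_apply0, Real.cos_neg, Real.cos_arccos h0 h0']
    · rw [sc_apply1, Real.sin_neg, Real.sin_arccos,
        show (1 : ℝ) - u 0 ^ 2 = u 1 ^ 2 by linarith, Real.sqrt_sq_eq_abs,
        abs_of_neg hb, neg_neg]

lemma hasDerivAt_sc (θ : ℝ) : HasDerivAt sc (perp (sc θ)) θ := by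
  have h : sc = fun t : ℝ => Real.cos t • mk2 1 0 + Real.sin t • mk2 0 1 := by
    funext t
    apply e2_ext <;>
      simp [sc_apply0, sc_apply1, mk2_apply0, mk2_apply1, PiLp.add_apply,
        PiLp.smul_apply, smul_eq_mul]
  rw [h]
  have h2 := ((Real.hasDerivAt_cos θ).smul_const (mk2 1 0)).add
    ((Real.hasDerivAt_sin θ).smul_const (mk2 0 1))
  refine h2.congr_deriv ?_
  apply e2_ext <;>
    simp [perp_apply0, perp_apply1, sc_apply0, sc_apply1, mk2_apply0, mk2_apply1,
      PiLp.add_apply, PiLp.smul_apply, smul_eq_mul]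

lemma aux_div (p d c : ℝ) (hc : 0 < c) (h : p ^ 2 + d ^ 2 = c ^ 2) :
    1 - (p / c) ^ 2 = (d / c) ^ 2 := by
  field_simp
  linarith

lemma aux0 (a b a0 b0 R R0 : ℝ) (hR : 0 < R) (hR0 : 0 < R0)
    (h0 : a0 ^ 2 + b0 ^ 2 = R0 ^ 2) :
    R⁻¹ * a =
      R0⁻¹ * a0 * ((a0 * a + b0 * b) / (R * R0)) -
        R0⁻¹ * b0 * ((-b0 * a + a0 * b) / (R * R0)) := by
  have hR' : R ≠ 0 := hR.ne'
  have hR0' : R0 ≠ 0 := hR0.ne'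
  field_simp
  linear_combination (-a) * h0

lemma aux1 (a b a0 b0 R R0 : ℝ) (hR : 0 < R) (hR0 : 0 < R0)
    (h0 : a0 ^ 2 + b0 ^ 2 = R0 ^ 2) :
    R⁻¹ * b =
      R0⁻¹ * b0 * ((a0 * a + b0 * b) / (R * R0)) +
        R0⁻¹ * a0 * ((-b0 * a + a0 * b) / (R * R0)) := by
  have hR' : R ≠ 0 := hR.ne'
  have hR0' : R0 ≠ 0 := hR0.ne'
  field_simp
  linear_combination (-b) * h0

lemma polar_id (z₀ z : E2) (θ₀ : ℝ) (hz₀ : z₀ ≠ 0) (hd : 0 < ⟪z₀, z⟫)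
    (hθ : sc θ₀ = ‖z₀‖⁻¹ • z₀) :
    ‖z‖⁻¹ • z = sc (θ₀ + Real.arcsin (⟪perp z₀, z⟫ / (‖z‖ * ‖z₀‖))) := by
  have hz : z ≠ 0 := by rintro rfl; simp at hd
  have hr : (0:ℝ) < ‖z‖ := norm_pos_iff.mpr hz
  have hr₀ : (0:ℝ) < ‖z₀‖ := norm_pos_iff.mpr hz₀
  have hzsq : z 0 ^ 2 + z 1 ^ 2 = ‖z‖ ^ 2 := (normsq2 z).symm
  have hz₀sq : z₀ 0 ^ 2 + z₀ 1 ^ 2 = ‖z₀‖ ^ 2 := (normsq2 z₀).symm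
  have hdval : ⟪z₀, z⟫ = z₀ 0 * z 0 + z₀ 1 * z 1 := inner2 _ _
  have hpval : ⟪perp z₀, z⟫ = -(z₀ 1) * z 0 + z₀ 0 * z 1 := by
    rw [inner2, perp_apply0, perp_apply1]
  set s := ⟪perp z₀, z⟫ / (‖z‖ * ‖z₀‖) with hs
  have hrr : (0:ℝ) < ‖z‖ * ‖z₀‖ := mul_pos hr hr₀
  have hp2 : ⟪perp z₀, z⟫ ^ 2 + ⟪z₀, z⟫ ^ 2 = (‖z‖ * ‖z₀‖) ^ 2 := by
    rw [hpval, hdval]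
    rw [mul_pow, ← hzsq, ← hz₀sq]; ring
  have h1s := aux_div (⟪perp z₀, z⟫) (⟪z₀, z⟫) (‖z‖ * ‖z₀‖) hrr hp2
  have hs2 : s ^ 2 ≤ 1 := by
    rw [hs, div_pow, div_le_one (by positivity)]
    nlinarith [sq_nonneg (⟪z₀, z⟫ : ℝ)]
  have hsle : -1 ≤ s := by nlinarith
  have hsle' : s ≤ 1 := by nlinarith
  have hsin : Real.sin (Real.arcsin s) = s := Real.sin_arcsin hsle hsle'
  have hcos : Real.cos (Real.arcsin s) = ⟪z₀, z⟫ / (‖z‖ * ‖z₀‖) := by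
    rw [Real.cos_arcsin, hs, h1s, Real.sqrt_sq (div_nonneg hd.le hrr.le)]
  have hc0 : Real.cos θ₀ = ‖z₀‖⁻¹ * z₀ 0 := by
    have h := congrArg (fun v : E2 => v 0) hθ
    simp only [sc_apply0, PiLp.smul_apply, smul_eq_mul] at h
    exact h
  have hs0 : Real.sin θ₀ = ‖z₀‖⁻¹ * z₀ 1 := by
    have h := congrArg (fun v : E2 => v 1) hθ
    simp only [sc_apply1, PiLp.smul_apply, smul_eq_mul] at h
    exact h
  apply e2_ext
  · rw [PiLp.smul_apply, smul_eq_mul, sc_apply0, Real.cos_add, hcos, hsin, hc0, hs0,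
      hs, hdval, hpval]
    exact aux0 (z 0) (z 1) (z₀ 0) (z₀ 1) ‖z‖ ‖z₀‖ hr hr₀ hz₀sq
  · rw [PiLp.smul_apply, smul_eq_mul, sc_apply1, Real.sin_add, hcos, hsin, hc0, hs0,
      hs, hdval, hpval]
    exact aux1 (z 0) (z 1) (z₀ 0) (z₀ 1) ‖z‖ ‖z₀‖ hr hr₀ hz₀sq

/-- **Step 1: extension of an entropy.** If `Φ` is a smooth entropy on `𝕊¹` and
`η : [0,∞) → ℝ` is smooth with `η = 0` on `[0,1/2] ∪ [2,∞)` and `η(1) = 1`, then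
`Φ̃(z) = η(|z|)·Φ(z/|z|)` (with `Φ̃(0) = 0`) is smooth, compactly supported, and satisfies
`z · (DΦ̃(z) z^⊥) = 0` for every `z ∈ ℝ²`. -/
theorem statement6 (Φ : E2 → E2) (hΦsmooth : ContDiff ℝ (⊤ : ℕ∞) (fun θ : ℝ => Φ (sc θ)))
    (hΦent : ∀ θ : ℝ, ⟪deriv (fun θ : ℝ => Φ (sc θ)) θ, sc θ⟫ = 0)
    (η : ℝ → ℝ) (hηsmooth : ContDiffOn ℝ (⊤ : ℕ∞) η (Ici 0))
    (hη0 : ∀ r : ℝ, (0 ≤ r ∧ r ≤ 1 / 2) ∨ 2 ≤ r → η r = 0) (hη1 : η 1 = 1)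
    (Φt : E2 → E2) (hΦt0 : Φt 0 = 0)
    (hΦt : ∀ z : E2, z ≠ 0 → Φt z = η ‖z‖ • Φ (‖z‖⁻¹ • z)) :
    ContDiff ℝ (⊤ : ℕ∞) Φt ∧ HasCompactSupport Φt ∧
      ∀ z : E2, ⟪z, fderiv ℝ Φt z (perp z)⟫ = 0 := by
  set f : ℝ → E2 := fun θ : ℝ => Φ (sc θ) with hf
  have hzero : ∀ z : E2, ‖z‖ < 1 / 2 → Φt z = 0 := by
    intro z hz
    by_cases h0 : z = 0
    · rw [h0, hΦt0]
    · rw [hΦt z h0, hη0 ‖z‖ (Or.inl ⟨norm_nonneg z, hz.le⟩), zero_smul]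
  have hsm : ∀ z₀ : E2, ContDiffAt ℝ (⊤ : ℕ∞) Φt z₀ := by
    intro z₀
    by_cases hz₀' : ‖z₀‖ < 1 / 2
    · refine (contDiffAt_const (c := (0 : E2))).congr_of_eventuallyEq ?_
      filter_upwards [isOpen_ball.mem_nhds (mem_ball_zero_iff.mpr hz₀')] with z hz
      exact hzero z (mem_ball_zero_iff.mp hz)
    · have hz0 : z₀ ≠ 0 := by
        intro h; rw [h, norm_zero] at hz₀'; exact hz₀' (by norm_num)
      have hu1 : ‖(‖z₀‖⁻¹ • z₀ : E2)‖ = 1 := by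
        rw [norm_smul, norm_inv, norm_norm, inv_mul_cancel₀ (norm_pos_iff.mpr hz0).ne']
      obtain ⟨θ₀, hθ₀⟩ := sc_surj _ hu1
      have hrpos : (0:ℝ) < ‖z₀‖ := norm_pos_iff.mpr hz0
      have hFs : ContDiffAt ℝ (⊤ : ℕ∞)
          (fun z : E2 => η ‖z‖ • f (θ₀ + Real.arcsin (⟪perp z₀, z⟫ / (‖z‖ * ‖z₀‖)))) z₀ := by
        have hn : ContDiffAt ℝ (⊤ : ℕ∞) (fun z : E2 => ‖z‖) z₀ := contDiffAt_norm ℝ hz0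
        have h1 : ContDiffAt ℝ (⊤ : ℕ∞) (fun z : E2 => η ‖z‖) z₀ :=
          (hηsmooth.contDiffAt (Ici_mem_nhds hrpos)).comp z₀ hn
        have h2 : ContDiffAt ℝ (⊤ : ℕ∞) (fun z : E2 => ⟪perp z₀, z⟫ / (‖z‖ * ‖z₀‖)) z₀ :=
          ((contDiff_const.inner (𝕜 := ℝ) contDiff_id).contDiffAt).div
            (hn.mul contDiffAt_const) (by positivity)
        have hval : ⟪perp z₀, z₀⟫ / (‖z₀‖ * ‖z₀‖) = 0 := by
          rw [inner_perp_self, zero_div]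
        have h3 : ContDiffAt ℝ (⊤ : ℕ∞) Real.arcsin (⟪perp z₀, z₀⟫ / (‖z₀‖ * ‖z₀‖)) := by
          rw [hval]; exact Real.contDiffAt_arcsin (by norm_num) (by norm_num)
        have h4 := h3.comp z₀ h2
        have h5 : ContDiffAt ℝ (⊤ : ℕ∞)
            (fun z : E2 => f (θ₀ + Real.arcsin (⟪perp z₀, z⟫ / (‖z‖ * ‖z₀‖)))) z₀ :=
          hΦsmooth.contDiffAt.comp z₀ (contDiffAt_const.add h4)
        exact h1.smul h5
      refine hFs.congr_of_eventuallyEq ?_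
      have hUopen : IsOpen {z : E2 | 0 < ⟪z₀, z⟫} :=
        isOpen_lt continuous_const (continuous_const.inner continuous_id)
      have hmem : z₀ ∈ {z : E2 | 0 < ⟪z₀, z⟫} := by
        simp only [Set.mem_setOf_eq, real_inner_self_eq_norm_sq]
        positivity
      filter_upwards [hUopen.mem_nhds hmem] with z hz
      have hzne : z ≠ 0 := by
        rintro rfl; simp only [Set.mem_setOf_eq, inner_zero_right, lt_self_iff_false] at hz
      rw [hΦt z hzne, polar_id z₀ z θ₀ hz0 hz hθ₀]
  have hCD : ContDiff ℝ (⊤ : ℕ∞) Φt := contDiff_iff_contDiffAt.mpr hsm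
  refine ⟨hCD, ?_, ?_⟩
  · apply HasCompactSupport.intro (isCompact_closedBall (0 : E2) 2)
    intro z hz
    have h2 : 2 < ‖z‖ := by
      simpa [Metric.mem_closedBall, dist_zero_right, not_le] using hz
    have hzne : z ≠ 0 := by
      intro h; rw [h, norm_zero] at h2; linarith
    rw [hΦt z hzne, hη0 ‖z‖ (Or.inr h2.le), zero_smul]
  · intro z
    by_cases hz : z = 0
    · subst hz
      rw [perp_zero, map_zero, inner_zero_right]
    · have hu1 : ‖(‖z‖⁻¹ • z : E2)‖ = 1 := by
        rw [norm_smul, norm_inv, norm_norm, inv_mul_cancel₀ (norm_pos_iff.mpr hz).ne']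
      obtain ⟨θ₀, hθ₀⟩ := sc_surj _ hu1
      have hrpos : (0:ℝ) < ‖z‖ := norm_pos_iff.mpr hz
      have hγval : ∀ t : ℝ, Φt (‖z‖ • sc (θ₀ + t)) = η ‖z‖ • f (θ₀ + t) := by
        intro t
        have hnorm : ‖(‖z‖ • sc (θ₀ + t))‖ = ‖z‖ := by
          rw [norm_smul, norm_sc, mul_one, Real.norm_of_nonneg hrpos.le]
        have hne : ‖z‖ • sc (θ₀ + t) ≠ 0 := by
          intro h; rw [h, norm_zero] at hnorm; linarith
        rw [hΦt _ hne, hnorm, inv_smul_smul₀ hrpos.ne' _]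
      have hγ0 : ‖z‖ • sc (θ₀ + 0) = z := by
        rw [add_zero, hθ₀, smul_inv_smul₀ hrpos.ne']
      have hdsc : HasDerivAt (fun t : ℝ => ‖z‖ • sc (θ₀ + t)) (‖z‖ • perp (sc (θ₀ + 0))) 0 := by
        have hg : HasDerivAt (fun t : ℝ => θ₀ + t) 1 0 := (hasDerivAt_id 0).const_add θ₀
        have h1 := (hasDerivAt_sc (θ₀ + 0)).scomp 0 hg
        exact (h1.const_smul ‖z‖).congr_deriv (by rw [one_smul])
      have hdiff' : HasFDerivAt Φt (fderiv ℝ Φt z) (‖z‖ • sc (θ₀ + 0)) := by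
        rw [hγ0]
        exact ((hsm z).differentiableAt (by simp)).hasFDerivAt
      have hcomp := hdiff'.comp_hasDerivAt 0 hdsc
      simp only [Function.comp_def] at hcomp
      have hv : ‖z‖ • perp (sc (θ₀ + 0)) = perp z := by rw [← perp_smul, hγ0]
      rw [hv] at hcomp
      have heq : (fun t : ℝ => Φt (‖z‖ • sc (θ₀ + t))) = fun t : ℝ => η ‖z‖ • f (θ₀ + t) :=
        funext hγval
      rw [heq] at hcomp
      have hd2 : HasDerivAt (fun t : ℝ => η ‖z‖ • f (θ₀ + t)) (η ‖z‖ • deriv f θ₀) 0 := by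
        have hdf : HasDerivAt f (deriv f (θ₀ + 0)) (θ₀ + 0) :=
          (hΦsmooth.differentiable (by simp) (θ₀ + 0)).hasDerivAt
        have hg : HasDerivAt (fun t : ℝ => θ₀ + t) 1 0 := (hasDerivAt_id 0).const_add θ₀
        have h1 := (hdf.scomp 0 hg).const_smul (η ‖z‖)
        exact h1.congr_deriv (by rw [one_smul, add_zero])
      have hkey : fderiv ℝ Φt z (perp z) = η ‖z‖ • deriv f θ₀ := hcomp.unique hd2
      have hzrep : z = ‖z‖ • sc θ₀ := by rw [hθ₀, smul_inv_smul₀ hrpos.ne']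
      have h0 : (⟪z, deriv f θ₀⟫ : ℝ) = ‖z‖ * ⟪sc θ₀, deriv f θ₀⟫ := by
        conv_lhs => rw [hzrep]
        exact real_inner_smul_left _ _ _
      rw [hkey, real_inner_smul_right, h0, real_inner_comm, hΦent θ₀]
      ring
end
end

section
/- Let B ⊆ ℝ² be open, let Φ̃ ∈ C_c^∞(ℝ², ℝ²), Ψ ∈ C_c^∞(ℝ², ℝ²) and γ ∈ C_c^∞(ℝ², ℝ) satisfy DΦ̃(z) = −2 Ψ(z) ⊗ z + γ(z)·Id for every z ∈ ℝ². Then for every smooth vector field u : B → ℝ² with ∇·u = 0 pointwise on B, one has the pointwise identity ∇·[Φ̃(u(x))] = Ψ(u(x)) · ∇(1 − |u(x)|²) for every x ∈ B. -/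
open MeasureTheory Real Set Metric Filter
open scoped RealInnerProductSpace Topology ENNReal NNReal

noncomputable section

/-- The divergence `∇·F = ∂₁F₁ + ∂₂F₂` of a vector field on the plane. -/
def div2 (F : E2 → E2) (x : E2) : ℝ :=
  ∑ i : Fin 2, fderiv ℝ F x (EuclideanSpace.single i 1) i

lemma basis_expand (v : E2) : v = ∑ i : Fin 2, v i • EuclideanSpace.single i (1:ℝ) := by
  ext j
  simp [Finset.sum_apply, EuclideanSpace.single_apply]
  fin_cases j <;> simp [Fin.sum_univ_two]

/-- **Step 3: entropy production of a smooth divergence-free field.** If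
`DΦ̃(z) = −2 Ψ(z) ⊗ z + γ(z)·Id` and `u` is smooth and pointwise divergence-free on the
open set `B`, then `∇·[Φ̃(u)] = Ψ(u) · ∇(1 − |u|²)` pointwise on `B`. -/
theorem statement8 (B : Set E2) (hB : IsOpen B)
    (Φt Ψ : E2 → E2) (γ : E2 → ℝ)
    (hΦts : ContDiff ℝ (⊤ : ℕ∞) Φt) (hΦtc : HasCompactSupport Φt)
    (hΨs : ContDiff ℝ (⊤ : ℕ∞) Ψ) (hΨc : HasCompactSupport Ψ)
    (hγs : ContDiff ℝ (⊤ : ℕ∞) γ) (hγc : HasCompactSupport γ)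
    (hdec : ∀ z w : E2, fderiv ℝ Φt z w = (-2 * ⟪z, w⟫) • Ψ z + γ z • w)
    (u : E2 → E2) (hu : ContDiffOn ℝ (⊤ : ℕ∞) u B)
    (hdiv : ∀ x ∈ B, div2 u x = 0) :
    ∀ x ∈ B, div2 (fun y => Φt (u y)) x
      = ⟪Ψ (u x), gradient (fun y => 1 - ‖u y‖ ^ 2) x⟫ := by
  intro x hx
  have hux : DifferentiableAt ℝ u x :=
    (hu.contDiffAt (hB.mem_nhds hx)).differentiableAt (by simp)
  set A := fderiv ℝ u x with hA
  have hΦd : DifferentiableAt ℝ Φt (u x) := (hΦts.differentiable (by simp)).differentiableAt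
  have hcomp : fderiv ℝ (fun y => Φt (u y)) x = (fderiv ℝ Φt (u x)).comp A :=
    fderiv_comp x hΦd hux
  set g : E2 → ℝ := fun y => 1 - ‖u y‖ ^ 2 with hgdef
  have h1 : g = fun y => 1 - ⟪u y, u y⟫ := by
    funext y; rw [hgdef]; rw [real_inner_self_eq_norm_sq]
  have hinnd : DifferentiableAt ℝ (fun y => ⟪u y, u y⟫) x := hux.inner ℝ hux
  have hg : ∀ v : E2, fderiv ℝ g x v = -2 * ⟪u x, A v⟫ := by
    intro v
    rw [h1, fderiv_const_sub 1]
    rw [ContinuousLinearMap.neg_apply, fderiv_inner_apply ℝ hux hux v]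
    rw [real_inner_comm (A v) (u x)]
    ring
  have hgd : DifferentiableAt ℝ g x := by
    rw [h1]; exact (differentiableAt_const 1).sub hinnd
  have hgrad : ∀ v : E2, ⟪gradient g x, v⟫ = fderiv ℝ g x v := by
    intro v
    have := hgd.hasGradientAt.hasFDerivAt.fderiv
    rw [this]
    simp [InnerProductSpace.toDual_apply_apply]
  -- RHS
  have hRHS : ⟪Ψ (u x), gradient g x⟫ = -2 * ⟪u x, A (Ψ (u x))⟫ := by
    rw [real_inner_comm, hgrad, hg]
  rw [hRHS]
  -- expand Ψ (u x) in the basis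
  have hexp : ⟪u x, A (Ψ (u x))⟫
      = ∑ i : Fin 2, Ψ (u x) i * ⟪u x, A (EuclideanSpace.single i 1)⟫ := by
    conv_lhs => rw [basis_expand (Ψ (u x))]
    rw [map_sum, inner_sum]
    congr 1; funext i
    rw [A.map_smul, real_inner_smul_right]
  -- LHS
  have hdu : div2 u x = 0 := hdiv x hx
  rw [div2, hcomp]
  have hterm : ∀ i : Fin 2,
      ((fderiv ℝ Φt (u x)).comp A) (EuclideanSpace.single i 1) i
      = (-2 * ⟪u x, A (EuclideanSpace.single i 1)⟫) * Ψ (u x) i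
        + γ (u x) * (A (EuclideanSpace.single i 1) i) := by
    intro i
    rw [ContinuousLinearMap.comp_apply, hdec]
    simp [PiLp.add_apply, PiLp.smul_apply, smul_eq_mul]
  rw [Finset.sum_congr rfl (fun i _ => hterm i), Finset.sum_add_distrib,
    ← Finset.mul_sum]
  have : ∑ i : Fin 2, A (EuclideanSpace.single i 1) i = div2 u x := rfl
  rw [this, hdu, mul_zero, add_zero, hexp, Finset.mul_sum]
  congr 1; funext i; ring
end
end

section
/- Let u : ℝ² → ℝ² be measurable with |u(x)| = 1 for a.e. x, let ρ : ℝ² → [0,∞) be smooth with ∫ ρ = 1 and support in the unit ball, set ρ_ε(x) = ε^{−2}ρ(x/ε) and u_ε = u ⋆ ρ_ε. Then for a.e. x ∈ ℝ²: 1 − |u_ε(x)|² ≤ (2 ‖ρ‖_{L^∞} / ε²) ∫_{B_ε} |u(x−z) − u(x)|² dz, where B_ε ⊂ ℝ² is the ball of radius ε centered at the origin. -/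
open MeasureTheory Real Set Metric Filter
open scoped RealInnerProductSpace Topology ENNReal NNReal

noncomputable section

/-- The rescaled mollifier `ρ_ε(x) = ε⁻² ρ(x/ε)` on the plane. -/
def moll (ρ : E2 → ℝ) (ε : ℝ) (z : E2) : ℝ := (ε ^ 2)⁻¹ * ρ (ε⁻¹ • z)

set_option maxHeartbeats 1000000 in
/-- **Step 6(i).** For a unit-length measurable field `u` and `u_ε = u ⋆ ρ_ε`, for a.e. `x`:
`1 − |u_ε(x)|² ≤ (2‖ρ‖_∞/ε²) ∫_{B_ε} |u(x−z) − u(x)|² dz`. -/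
theorem statement10 (u : E2 → E2) (hmeas : Measurable u)
    (hunit : ∀ᵐ x : E2, ‖u x‖ = 1)
    (ρ : E2 → ℝ) (hρsmooth : ContDiff ℝ (⊤ : ℕ∞) ρ) (hρnn : ∀ x, 0 ≤ ρ x)
    (hρ1 : ∫ x, ρ x = 1) (hρsupp : Function.support ρ ⊆ ball 0 1)
    (ε : ℝ) (hε : 0 < ε) :
    ∀ᵐ x : E2,
      1 - ‖∫ z, moll ρ ε z • u (x - z)‖ ^ 2
        ≤ 2 * (⨆ z : E2, ρ z) / ε ^ 2 * ∫ z in ball (0 : E2) ε, ‖u (x - z) - u x‖ ^ 2 := by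
  have hρcont : Continuous ρ := hρsmooth.continuous
  have hρcs : HasCompactSupport ρ := by
    apply HasCompactSupport.intro (isCompact_closedBall (0 : E2) 1)
    intro z hz
    by_contra h
    exact hz (ball_subset_closedBall (hρsupp h))
  set M : ℝ := ⨆ z : E2, ρ z with hMdef
  obtain ⟨C, hC⟩ := hρcont.bounded_above_of_compact_support hρcs
  have hbdd : BddAbove (Set.range ρ) :=
    ⟨C, by rintro _ ⟨z, rfl⟩; exact le_trans (le_abs_self _) (Real.norm_eq_abs (ρ z) ▸ hC z)⟩
  have hM : ∀ z, ρ z ≤ M := fun z => le_ciSup hbdd z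
  have hM0 : (0:ℝ) ≤ M := le_trans (hρnn 0) (hM 0)
  have hε2 : (0:ℝ) < ε ^ 2 := by positivity
  set f : E2 → ℝ := moll ρ ε with hfdef
  have hf_cont : Continuous f := by
    exact continuous_const.mul (hρcont.comp (continuous_const_smul _))
  have hf_nn : ∀ z, 0 ≤ f z := fun z => mul_nonneg (by positivity) (hρnn _)
  have hf_le : ∀ z, f z ≤ M / ε ^ 2 := by
    intro z
    rw [div_eq_inv_mul]
    exact mul_le_mul_of_nonneg_left (hM _) (by positivity)
  have hf_supp : ∀ z ∉ ball (0:E2) ε, f z = 0 := by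
    intro z hz
    have : ρ (ε⁻¹ • z) = 0 := by
      by_contra h
      have h1 : ‖ε⁻¹ • z‖ < 1 := mem_ball_zero_iff.mp (hρsupp h)
      rw [norm_smul, norm_inv, Real.norm_eq_abs, abs_of_pos hε] at h1
      apply hz
      rw [mem_ball_zero_iff]
      have h2 := mul_lt_mul_of_pos_left h1 hε
      rw [mul_one] at h2
      calc ‖z‖ = ε * (ε⁻¹ * ‖z‖) := by field_simp
      _ < ε := h2
    simp [hfdef, moll, this]
  have hf_cs : HasCompactSupport f := by
    apply HasCompactSupport.intro (isCompact_closedBall (0 : E2) ε)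
    intro z hz
    exact hf_supp z (fun h => hz (ball_subset_closedBall h))
  have hf_int : Integrable f := hf_cont.integrable_of_hasCompactSupport hf_cs
  have hf_int1 : ∫ z, f z = 1 := by
    have h1 : ∫ z : E2, ρ (ε⁻¹ • z) = |((ε⁻¹) ^ Module.finrank ℝ E2)⁻¹| • ∫ z, ρ z :=
      Measure.integral_comp_smul volume ρ ε⁻¹
    simp only [finrank_euclideanSpace_fin, hρ1, smul_eq_mul, mul_one] at h1
    rw [hfdef]
    unfold moll
    rw [integral_const_mul, h1]
    rw [abs_of_pos (by positivity)]
    field_simp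
  -- main a.e. statement
  filter_upwards [hunit] with x hx
  have hz1 : ∀ᵐ z : E2, ‖u (x - z)‖ = 1 := by
    rw [← Filter.eventually_map (m := fun z : E2 => x - z)
      (P := fun y => ‖u y‖ = 1), Measure.map_sub_left_ae volume x]
    exact hunit
  have hum : Measurable fun z : E2 => u (x - z) :=
    hmeas.comp (measurable_const.sub measurable_id)
  have hdm : Measurable fun z : E2 => ‖u (x - z) - u x‖ ^ 2 :=
    ((hum.sub measurable_const).norm.pow measurable_const)
  set g : E2 → E2 := fun z => f z • u (x - z) with hgdef
  have hg_meas : AEStronglyMeasurable g volume :=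
    (hf_cont.measurable.smul hum).aestronglyMeasurable
  have hg_norm : ∀ᵐ z : E2, ‖g z‖ = f z := by
    filter_upwards [hz1] with z hz
    rw [hgdef]
    simp only [norm_smul, Real.norm_eq_abs, hz, mul_one, abs_of_nonneg (hf_nn z)]
  have hg_int : Integrable g := by
    apply Integrable.mono' hf_int hg_meas
    filter_upwards [hg_norm] with z hz
    rw [hz]
  set I : E2 := ∫ z, g z with hIdef
  have hip_int : Integrable fun z => f z * ⟪u x, u (x - z)⟫ := by
    apply Integrable.mono' hf_int
      ((hf_cont.measurable.mul ((measurable_const.inner hum))).aestronglyMeasurable)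
    filter_upwards [hz1] with z hz
    simp only [Pi.mul_apply]
    rw [Real.norm_eq_abs, abs_mul, abs_of_nonneg (hf_nn z)]
    have : |⟪u x, u (x - z)⟫| ≤ 1 := by
      have := abs_real_inner_le_norm (u x) (u (x - z))
      rw [hx, hz] at this; simpa using this
    nlinarith [hf_nn z]
  have key : ⟪u x, I⟫ = ∫ z, f z * ⟪u x, u (x - z)⟫ := by
    rw [hIdef, ← integral_inner hg_int (u x)]
    congr 1; funext z
    rw [hgdef]
    exact real_inner_smul_right _ _ _
  have hI_le : ‖I‖ ≤ 1 := by
    calc ‖I‖ ≤ ∫ z, ‖g z‖ := norm_integral_le_integral_norm g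
    _ = ∫ z, f z := integral_congr_ae hg_norm
    _ = 1 := hf_int1
  have h1 : 1 - ‖I‖ ^ 2 ≤ 2 * (1 - ⟪u x, I⟫) := by
    have h := real_inner_le_norm (u x) I
    rw [hx, one_mul] at h
    nlinarith [norm_nonneg I]
  have h2 : 1 - ⟪u x, I⟫ = ∫ z, f z * (1 - ⟪u x, u (x - z)⟫) := by
    have : (fun z => f z * (1 - ⟪u x, u (x - z)⟫))
        = fun z => f z - f z * ⟪u x, u (x - z)⟫ := by funext z; ring
    rw [this, integral_sub hf_int hip_int, hf_int1, key]
  have h3 : ∫ z, f z * ‖u (x - z) - u x‖ ^ 2 = 2 * (1 - ⟪u x, I⟫) := by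
    rw [h2, ← integral_const_mul]
    apply integral_congr_ae
    filter_upwards [hz1] with z hz
    have hns : ‖u (x - z) - u x‖ ^ 2 = 2 - 2 * ⟪u x, u (x - z)⟫ := by
      rw [norm_sub_sq_real, hz, hx, real_inner_comm]; ring
    rw [hns]; ring
  have hfd_int : Integrable fun z => f z * ‖u (x - z) - u x‖ ^ 2 := by
    apply Integrable.mono' (hf_int.const_mul 4)
      ((hf_cont.measurable.mul hdm).aestronglyMeasurable)
    filter_upwards [hz1] with z hz
    simp only [Pi.mul_apply]
    rw [Real.norm_eq_abs, abs_mul, abs_of_nonneg (hf_nn z), abs_of_nonneg (by positivity)]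
    have hd : ‖u (x - z) - u x‖ ≤ 2 := by
      calc ‖u (x - z) - u x‖ ≤ ‖u (x - z)‖ + ‖u x‖ := norm_sub_le _ _
      _ = 2 := by rw [hz, hx]; norm_num
    have hsq : ‖u (x - z) - u x‖ ^ 2 ≤ 4 := by
      nlinarith [norm_nonneg (u (x - z) - u x)]
    have := mul_le_mul_of_nonneg_left hsq (hf_nn z)
    linarith
  have h4 : ∫ z, f z * ‖u (x - z) - u x‖ ^ 2
      = ∫ z in ball (0:E2) ε, f z * ‖u (x - z) - u x‖ ^ 2 := by
    exact (setIntegral_eq_integral_of_forall_compl_eq_zero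
      (fun z hz => by rw [hf_supp z hz, zero_mul])).symm
  have hdsq_int : IntegrableOn (fun z => ‖u (x - z) - u x‖ ^ 2) (ball (0:E2) ε) volume := by
    apply Integrable.mono' (g := fun _ => (4:ℝ))
      (integrableOn_const measure_ball_lt_top.ne)
      hdm.aestronglyMeasurable.restrict
    apply ae_restrict_of_ae
    filter_upwards [hz1] with z hz
    rw [Real.norm_eq_abs, abs_of_nonneg (by positivity)]
    have hd : ‖u (x - z) - u x‖ ≤ 2 := by
      calc ‖u (x - z) - u x‖ ≤ ‖u (x - z)‖ + ‖u x‖ := norm_sub_le _ _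
      _ = 2 := by rw [hz, hx]; norm_num
    nlinarith [norm_nonneg (u (x - z) - u x)]
  have hcInt : IntegrableOn (fun z => M / ε ^ 2 * ‖u (x - z) - u x‖ ^ 2)
      (ball (0:E2) ε) volume := hdsq_int.const_mul _
  have h5 : ∫ z in ball (0:E2) ε, f z * ‖u (x - z) - u x‖ ^ 2
      ≤ ∫ z in ball (0:E2) ε, M / ε ^ 2 * ‖u (x - z) - u x‖ ^ 2 := by
    apply setIntegral_mono_on hfd_int.integrableOn hcInt measurableSet_ball
    intro z _
    exact mul_le_mul_of_nonneg_right (hf_le z) (by positivity)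
  have h6 : ∫ z in ball (0:E2) ε, M / ε ^ 2 * ‖u (x - z) - u x‖ ^ 2
      = M / ε ^ 2 * ∫ z in ball (0:E2) ε, ‖u (x - z) - u x‖ ^ 2 :=
    integral_const_mul _ _
  have hIntNN : 0 ≤ ∫ z in ball (0:E2) ε, ‖u (x - z) - u x‖ ^ 2 :=
    integral_nonneg fun z => by positivity
  have chain : 1 - ‖I‖ ^ 2 ≤ M / ε ^ 2 * ∫ z in ball (0:E2) ε, ‖u (x - z) - u x‖ ^ 2 := by
    calc 1 - ‖I‖ ^ 2 ≤ 2 * (1 - ⟪u x, I⟫) := h1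
    _ = ∫ z, f z * ‖u (x - z) - u x‖ ^ 2 := h3.symm
    _ = ∫ z in ball (0:E2) ε, f z * ‖u (x - z) - u x‖ ^ 2 := h4
    _ ≤ ∫ z in ball (0:E2) ε, M / ε ^ 2 * ‖u (x - z) - u x‖ ^ 2 := h5
    _ = M / ε ^ 2 * ∫ z in ball (0:E2) ε, ‖u (x - z) - u x‖ ^ 2 := h6
  calc 1 - ‖I‖ ^ 2 ≤ M / ε ^ 2 * ∫ z in ball (0:E2) ε, ‖u (x - z) - u x‖ ^ 2 := chain
  _ ≤ 2 * M / ε ^ 2 * ∫ z in ball (0:E2) ε, ‖u (x - z) - u x‖ ^ 2 := by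
      apply mul_le_mul_of_nonneg_right _ hIntNN
      exact (div_le_div_iff_of_pos_right hε2).mpr (by linarith)
end
end

section
/- Let v ∈ L³_loc(Ω) on Ω ⊆ ℝ² with coordinates (t,s), let ρ ∈ C_c^∞((−1,1)) with ρ ≥ 0 and ∫ ρ = 1, set ρ_ε(s) = ε^{−1}ρ(s/ε) and let v_ε denote convolution of v with ρ_ε in the variable s only. Then there is a constant C depending only on ρ such that for a.e. (t,s) at distance > ε from ∂Ω: | v_ε(t,s)² − (v² ⋆ ρ_ε)(t,s) | ≤ C ( (1/(2ε)) ∫_{−ε}^{ε} |v(t, s−σ) − v(t,s)|³ dσ )^{2/3}. -/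
open MeasureTheory Real Set Metric Filter
open scoped Topology ENNReal NNReal

noncomputable section

/-- A smooth compactly supported test function on the plane `ℝ × ℝ` (coordinates `(t,s)`)
with support contained in `Ω`. -/
def IsTest2 (Ω : Set (ℝ × ℝ)) (ζ : ℝ × ℝ → ℝ) : Prop :=
  ContDiff ℝ (⊤ : ℕ∞) ζ ∧ HasCompactSupport ζ ∧ tsupport ζ ⊆ Ω

/-- Partial derivative in the time variable `t`. -/
def pdT (ζ : ℝ × ℝ → ℝ) (x : ℝ × ℝ) : ℝ := fderiv ℝ ζ x (1, 0)

/-- Partial derivative in the space variable `s`. -/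
def pdS (ζ : ℝ × ℝ → ℝ) (x : ℝ × ℝ) : ℝ := fderiv ℝ ζ x (0, 1)

/-- `v` is a distributional solution of the Burgers equation `v_t + (v²/2)_s = 0` on `Ω`:
`∫_Ω (v ∂_t ζ + (v²/2) ∂_s ζ) = 0` for all test functions `ζ` supported in `Ω`. -/
def BurgersDistSol (Ω : Set (ℝ × ℝ)) (v : ℝ × ℝ → ℝ) : Prop :=
  ∀ ζ : ℝ × ℝ → ℝ, IsTest2 Ω ζ →
    ∫ x in Ω, (v x * pdT ζ x + (v x) ^ 2 / 2 * pdS ζ x) = 0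

/-- The inner region `Ω_ε = {x ∈ Ω : dist(x, ∂Ω) > ε}`. -/
def innerSet (Ω : Set (ℝ × ℝ)) (ε : ℝ) : Set (ℝ × ℝ) :=
  {x ∈ Ω | ε < Metric.infDist x (frontier Ω)}

lemma rpow3 (x : ℝ) : x ^ ((3:ℝ)) = x ^ (3:ℕ) := by
  rw [← Real.rpow_natCast x 3]; norm_num

lemma holder_aux {μ : Measure ℝ} [IsProbabilityMeasure μ] {g : ℝ → ℝ}
    (hg : AEStronglyMeasurable g μ) (hg0 : ∀ σ, 0 ≤ g σ)
    (hg3 : Integrable (fun σ => g σ ^ 3) μ) :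
    (∫ σ, g σ ∂μ ≤ (∫ σ, g σ ^ 3 ∂μ) ^ ((1:ℝ)/3)) ∧
    (∫ σ, g σ ^ 2 ∂μ ≤ (∫ σ, g σ ^ 3 ∂μ) ^ ((2:ℝ)/3)) := by
  have hg3' : Integrable (fun x => ‖g x‖ ^ ((3:ℝ≥0∞)).toReal) μ := by
    refine hg3.congr (Filter.Eventually.of_forall (fun x => ?_))
    show g x ^ 3 = ‖g x‖ ^ ((3:ℝ≥0∞)).toReal
    rw [Real.norm_eq_abs, abs_of_nonneg (hg0 x), ENNReal.toReal_ofNat, rpow3]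
  have hmem3 : MemLp g 3 μ := by
    have h1 : MemLp (fun x => ‖g x‖ ^ ((3:ℝ≥0∞)).toReal) ((3:ℝ≥0∞)/(3:ℝ≥0∞)) μ := by
      rw [ENNReal.div_self (by norm_num) (by norm_num)]
      exact memLp_one_iff_integrable.2 hg3'
    exact (memLp_norm_rpow_iff hg (by norm_num) (by norm_num)).1 h1
  have hJ : ∫ σ, g σ ^ ((3:ℝ)) ∂μ = ∫ σ, g σ ^ 3 ∂μ := by
    refine integral_congr_ae (Filter.Eventually.of_forall (fun x => ?_))
    exact rpow3 (g x)
  constructor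
  · have h := integral_mul_le_Lp_mul_Lq_of_nonneg (μ := μ)
      (p := 3) (q := 3/2) ⟨by norm_num, by norm_num, by norm_num⟩
      (f := g) (g := fun _ => (1:ℝ))
      (Filter.Eventually.of_forall hg0) (Filter.Eventually.of_forall (fun _ => zero_le_one))
      (by rwa [show ENNReal.ofReal 3 = 3 by norm_num [ENNReal.ofReal_ofNat]])
      (memLp_const 1)
    simp only [mul_one, Real.one_rpow, integral_const, measure_univ, ENNReal.toReal_one,
      one_smul] at h
    rw [hJ] at h
    simpa using h
  · have hg2m : AEStronglyMeasurable (fun x => g x ^ 2) μ :=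
      (hg.mul hg).congr (Filter.Eventually.of_forall (fun x => (pow_two (g x)).symm))
    have hq0 : (ENNReal.ofReal (3/2)) ≠ 0 := by
      rw [Ne, ENNReal.ofReal_eq_zero]; norm_num
    have hq' : (ENNReal.ofReal (3/2)) ≠ ∞ := ENNReal.ofReal_ne_top
    have hcube : ∀ x, ‖g x ^ 2‖ ^ (ENNReal.ofReal (3/2)).toReal = g x ^ 3 := by
      intro x
      rw [Real.norm_eq_abs, abs_of_nonneg (pow_nonneg (hg0 x) 2),
        ENNReal.toReal_ofReal (by norm_num), ← Real.rpow_natCast (g x) 2,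
        ← Real.rpow_mul (hg0 x)]
      norm_num [rpow3]
    have hmem32 : MemLp (fun x => g x ^ 2) (ENNReal.ofReal (3/2)) μ := by
      have h1 : MemLp (fun x => ‖g x ^ 2‖ ^ (ENNReal.ofReal (3/2)).toReal)
          ((ENNReal.ofReal (3/2)) / (ENNReal.ofReal (3/2))) μ := by
        rw [ENNReal.div_self hq0 hq']
        refine memLp_one_iff_integrable.2 (hg3.congr ?_)
        exact Filter.Eventually.of_forall (fun x => (hcube x).symm)
      exact (memLp_norm_rpow_iff hg2m hq0 hq').1 h1
    have h := integral_mul_le_Lp_mul_Lq_of_nonneg (μ := μ)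
      (p := 3/2) (q := 3) ⟨by norm_num, by norm_num, by norm_num⟩
      (f := fun x => g x ^ 2) (g := fun _ => (1:ℝ))
      (Filter.Eventually.of_forall (fun x => pow_nonneg (hg0 x) 2))
      (Filter.Eventually.of_forall (fun _ => zero_le_one))
      hmem32
      (by rw [show ENNReal.ofReal 3 = 3 by norm_num [ENNReal.ofReal_ofNat]];
          exact memLp_const 1)
    simp only [mul_one, Real.one_rpow, integral_const, measure_univ, ENNReal.toReal_one,
      one_smul] at h
    have hJ2 : ∫ x, (g x ^ 2) ^ ((3/2:ℝ)) ∂μ = ∫ σ, g σ ^ 3 ∂μ := by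
      refine integral_congr_ae (Filter.Eventually.of_forall (fun x => ?_))
      show (g x ^ 2 : ℝ) ^ ((3/2 : ℝ)) = g x ^ 3
      rw [← Real.rpow_natCast (g x) 2, ← Real.rpow_mul (hg0 x)]
      norm_num [rpow3]
    rw [hJ2] at h
    rw [show (1/(3/2) : ℝ) = 2/3 by norm_num] at h
    simpa using h

lemma pointwise_aux {M ε : ℝ} (hε : 0 < ε) (hM : 0 ≤ M)
    (ρ : ℝ → ℝ) (hρc : Continuous ρ) (hρnn : ∀ s, 0 ≤ ρ s) (hρM : ∀ s, ρ s ≤ M)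
    (hρsupp : tsupport ρ ⊆ Ioo (-1) 1) (hρ1 : ∫ s, ρ s = 1)
    (f : ℝ → ℝ) (hfm : Measurable f) (a : ℝ)
    (hf3 : IntegrableOn (fun σ => |f σ| ^ 3) (Ioc (-ε) ε)) :
    |(∫ σ, f σ * (ε⁻¹ * ρ (σ / ε))) ^ 2 - ∫ σ, (f σ)^2 * (ε⁻¹ * ρ (σ / ε))|
      ≤ (2 * (2*M) ^ ((2:ℝ)/3)) * ((2*ε)⁻¹ * ∫ σ in Ioc (-ε) ε, |f σ - a| ^ 3) ^ ((2:ℝ)/3) := by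
  set I : Set ℝ := Ioc (-ε) ε with hI
  set ρε : ℝ → ℝ := fun σ => ε⁻¹ * ρ (σ / ε) with hρε
  have hρεc : Continuous ρε := continuous_const.mul (hρc.comp (continuous_id.div_const ε))
  have hρε0 : ∀ σ, 0 ≤ ρε σ := fun σ => mul_nonneg (inv_nonneg.2 hε.le) (hρnn _)
  have hρεM : ∀ σ, ρε σ ≤ ε⁻¹ * M := fun σ =>
    mul_le_mul_of_nonneg_left (hρM _) (inv_nonneg.2 hε.le)
  have hρεsupp : ∀ σ ∉ I, ρε σ = 0 := by
    intro σ hσ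
    have hz : ρ (σ / ε) = 0 := by
      by_contra h
      have h1 : σ / ε ∈ tsupport ρ := subset_tsupport ρ h
      have h2 := hρsupp h1
      apply hσ
      constructor
      · have := (lt_div_iff₀ hε).1 h2.1
        linarith
      · have := (div_lt_one hε).1 h2.2
        linarith
    simp [hρε, hz]
  set g : ℝ → ℝ := fun σ => |f σ - a| with hg
  have hgm : Measurable g := (hfm.sub measurable_const).abs
  have hg0 : ∀ σ, 0 ≤ g σ := fun σ => abs_nonneg _
  -- integrability facts on I
  have hconst : ∀ c : ℝ, IntegrableOn (fun _ => c) I :=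
    fun c => integrableOn_const measure_Ioc_lt_top.ne
  have hf1 : IntegrableOn f I := by
    refine Integrable.mono' (hf3.add (hconst 1)) hfm.aestronglyMeasurable
      (Filter.Eventually.of_forall (fun σ => ?_))
    simp only [Pi.add_apply]
    rw [Real.norm_eq_abs]
    rcases le_total (|f σ|) 1 with h | h
    · linarith [pow_nonneg (abs_nonneg (f σ)) 3]
    · linarith [le_self_pow₀ h (by norm_num : (3:ℕ) ≠ 0)]
  have hf2 : IntegrableOn (fun σ => f σ ^ 2) I := by
    refine Integrable.mono' (hf3.add (hconst 1)) (hfm.pow_const 2).aestronglyMeasurable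
      (Filter.Eventually.of_forall (fun σ => ?_))
    simp only [Pi.add_apply]
    rw [Real.norm_eq_abs, abs_of_nonneg (sq_nonneg _), ← sq_abs]
    rcases le_total (|f σ|) 1 with h | h
    · linarith [pow_le_one₀ (abs_nonneg (f σ)) h (n := 2), pow_nonneg (abs_nonneg (f σ)) 3]
    · linarith [pow_le_pow_right₀ h (by norm_num : (2:ℕ) ≤ 3)]
  have hg3 : IntegrableOn (fun σ => g σ ^ 3) I := by
    refine Integrable.mono' ((hf3.const_mul 4).add (hconst (4 * |a| ^ 3)))
      ((hgm.pow_const 3).aestronglyMeasurable)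
      (Filter.Eventually.of_forall (fun σ => ?_))
    simp only [Pi.add_apply]
    rw [Real.norm_eq_abs, abs_of_nonneg (pow_nonneg (hg0 σ) 3)]
    have h1 : g σ ≤ |f σ| + |a| := abs_sub _ _
    have h2 : g σ ^ 3 ≤ (|f σ| + |a|) ^ 3 := pow_le_pow_left₀ (hg0 σ) h1 3
    have hu := abs_nonneg (f σ); have hw := abs_nonneg a
    nlinarith [mul_nonneg (add_nonneg hu hw) (sq_nonneg (|f σ| - |a|))]
  have hg1 : IntegrableOn g I := by
    refine Integrable.mono' (hg3.add (hconst 1)) hgm.aestronglyMeasurable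
      (Filter.Eventually.of_forall (fun σ => ?_))
    simp only [Pi.add_apply]
    rw [Real.norm_eq_abs, abs_of_nonneg (hg0 σ)]
    rcases le_total (g σ) 1 with h | h
    · linarith [pow_nonneg (hg0 σ) 3]
    · linarith [le_self_pow₀ h (by norm_num : (3:ℕ) ≠ 0)]
  have hg2 : IntegrableOn (fun σ => g σ ^ 2) I := by
    refine Integrable.mono' (hg3.add (hconst 1)) (hgm.pow_const 2).aestronglyMeasurable
      (Filter.Eventually.of_forall (fun σ => ?_))
    simp only [Pi.add_apply]
    rw [Real.norm_eq_abs, abs_of_nonneg (sq_nonneg _)]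
    rcases le_total (g σ) 1 with h | h
    · linarith [pow_le_one₀ (hg0 σ) h (n := 2), pow_nonneg (hg0 σ) 3]
    · linarith [pow_le_pow_right₀ h (by norm_num : (2:ℕ) ≤ 3)]
  have hρεI : IntegrableOn ρε I := hρεc.integrableOn_Ioc
  have hmul : ∀ {h : ℝ → ℝ}, Measurable h → IntegrableOn h I →
      IntegrableOn (fun σ => ρε σ * h σ) I := by
    intro h hm hint
    refine Integrable.mono' (hint.abs.const_mul (ε⁻¹ * M))
      ((hρεc.measurable.mul hm).aestronglyMeasurable)
      (Filter.Eventually.of_forall (fun σ => ?_))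
    rw [Real.norm_eq_abs, abs_mul, abs_of_nonneg (hρε0 σ)]
    exact mul_le_mul (hρεM σ) le_rfl (abs_nonneg _)
      (mul_nonneg (inv_nonneg.2 hε.le) hM)
  -- full-line integrals reduce to I
  have hred : ∀ (h : ℝ → ℝ), (∫ σ, h σ * ρε σ) = ∫ σ in I, ρε σ * h σ := by
    intro h
    rw [show (fun σ => h σ * ρε σ) = fun σ => ρε σ * h σ by funext σ; ring]
    exact (setIntegral_eq_integral_of_forall_compl_eq_zero
      (fun σ hσ => by rw [hρεsupp σ hσ, zero_mul])).symm
  -- total mass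
  have e0 : ∫ σ in I, ρε σ = 1 := by
    rw [setIntegral_eq_integral_of_forall_compl_eq_zero (fun σ hσ => hρεsupp σ hσ)]
    rw [hρε]
    rw [integral_const_mul]
    rw [MeasureTheory.Measure.integral_comp_div ρ ε, hρ1, abs_of_pos hε]
    simp [inv_mul_cancel₀ hε.ne']
  -- the weighted probability measure
  set w : ℝ → ℝ≥0 := fun σ => (ρε σ).toNNReal with hw
  have hwm : Measurable w := measurable_real_toNNReal.comp hρεc.measurable
  set μ : Measure ℝ := (volume.restrict I).withDensity (fun σ => (w σ : ℝ≥0∞)) with hμ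
  have hconv : ∀ (h : ℝ → ℝ), ∫ σ, h σ ∂μ = ∫ σ in I, ρε σ * h σ := by
    intro h
    rw [hμ, integral_withDensity_eq_integral_smul hwm]
    refine integral_congr_ae (Filter.Eventually.of_forall (fun σ => ?_))
    show w σ • h σ = ρε σ * h σ
    rw [NNReal.smul_def, smul_eq_mul, Real.coe_toNNReal _ (hρε0 σ)]
  have hmass : IsProbabilityMeasure μ := by
    constructor
    rw [hμ, withDensity_apply _ MeasurableSet.univ, Measure.restrict_univ]
    have : Integrable (fun σ => ((w σ : ℝ))) (volume.restrict I) := by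
      refine hρεI.congr ?_
      exact Filter.Eventually.of_forall (fun σ => (Real.coe_toNNReal _ (hρε0 σ)).symm)
    rw [lintegral_coe_eq_integral w this]
    rw [show ∫ σ, ((w σ : ℝ)) ∂(volume.restrict I) = ∫ σ in I, ρε σ from
      integral_congr_ae (Filter.Eventually.of_forall
        (fun σ => Real.coe_toNNReal _ (hρε0 σ)))]
    rw [e0]; norm_num
  haveI := hmass
  -- integrability w.r.t. μ
  have hintμ : ∀ {h : ℝ → ℝ}, Measurable h → IntegrableOn h I → Integrable h μ := by
    intro h hm hint
    rw [hμ, integrable_withDensity_iff (hwm.coe_nnreal_ennreal)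
      (Filter.Eventually.of_forall (fun σ => ENNReal.coe_lt_top))]
    refine (hmul hm hint).congr (Filter.Eventually.of_forall (fun σ => ?_))
    show ρε σ * h σ = h σ * ((w σ : ℝ≥0∞)).toReal
    rw [ENNReal.coe_toReal, Real.coe_toNNReal _ (hρε0 σ), mul_comm]
  have hg3μ : Integrable (fun σ => g σ ^ 3) μ := hintμ (hgm.pow_const 3) hg3
  obtain ⟨H1, H2⟩ := holder_aux hgm.aestronglyMeasurable hg0 hg3μ
  -- notation
  set J : ℝ := ∫ σ in I, ρε σ * g σ ^ 3 with hJdef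
  have hJconv : ∫ σ, g σ ^ 3 ∂μ = J := hconv _
  have hE1 : ∫ σ, g σ ∂μ = ∫ σ in I, ρε σ * g σ := hconv _
  have hE2 : ∫ σ, g σ ^ 2 ∂μ = ∫ σ in I, ρε σ * g σ ^ 2 := hconv _
  rw [hJconv, hE1] at H1
  rw [hJconv, hE2] at H2
  have hJ0 : 0 ≤ J := by
    refine integral_nonneg (fun σ => mul_nonneg (hρε0 σ) (pow_nonneg (hg0 σ) 3))
  -- decompose the two integrals
  set I1 : ℝ := ∫ σ in I, ρε σ * (f σ - a) with hI1def
  have e_f : (∫ σ, f σ * ρε σ) = a + I1 := by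
    rw [hred f]
    have : ∀ σ, ρε σ * f σ = a * ρε σ + ρε σ * (f σ - a) := fun σ => by ring
    rw [integral_congr_ae (Filter.Eventually.of_forall this)]
    rw [integral_add ((hρεI.const_mul a)) (hmul (h := fun σ => f σ - a) (hfm.sub measurable_const)
      (hf1.sub (hconst a)))]
    rw [integral_const_mul, e0, mul_one]
  have e_f2 : (∫ σ, f σ ^ 2 * ρε σ) = a^2 + 2*a*I1 + ∫ σ in I, ρε σ * g σ ^ 2 := by
    rw [hred (fun σ => f σ ^ 2)]
    have : ∀ σ, ρε σ * f σ ^ 2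
        = a^2 * ρε σ + (2*a) * (ρε σ * (f σ - a)) + ρε σ * (f σ - a)^2 := fun σ => by ring
    rw [integral_congr_ae (Filter.Eventually.of_forall this)]
    have i1 : IntegrableOn (fun σ => a^2 * ρε σ) I := hρεI.const_mul _
    have i2 : IntegrableOn (fun σ => (2*a) * (ρε σ * (f σ - a))) I :=
      (hmul (hfm.sub measurable_const) (hf1.sub (hconst a))).const_mul _
    have i3 : IntegrableOn (fun σ => ρε σ * (f σ - a)^2) I := by
      refine (hmul ((hfm.sub measurable_const).pow_const 2) ?_).congr
        (Filter.Eventually.of_forall (fun σ => rfl))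
      refine hg2.congr (Filter.Eventually.of_forall (fun σ => ?_))
      show g σ ^ 2 = (f σ - a)^2
      rw [hg]; exact (sq_abs _)
    have i12 : IntegrableOn (fun σ => a^2 * ρε σ + (2*a) * (ρε σ * (f σ - a))) I := i1.add i2
    rw [integral_add i12 i3, integral_add i1 i2]
    rw [integral_const_mul (a^2) ρε, integral_const_mul (2*a) (fun σ => ρε σ * (f σ - a)), e0, mul_one]
    congr 1
    refine integral_congr_ae (Filter.Eventually.of_forall (fun σ => ?_))
    show ρε σ * (f σ - a)^2 = ρε σ * g σ ^ 2
    rw [hg]; rw [sq_abs]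
  -- |I1| ≤ ∫ ρε g
  have hI1abs : |I1| ≤ ∫ σ in I, ρε σ * g σ := by
    calc |I1| ≤ ∫ σ in I, |ρε σ| * |f σ - a| := by
          simpa [Real.norm_eq_abs] using norm_integral_le_integral_norm
            (μ := volume.restrict I) (fun σ => ρε σ * (f σ - a))
      _ = ∫ σ in I, ρε σ * g σ := by
          refine integral_congr_ae (Filter.Eventually.of_forall (fun σ => ?_))
          show |ρε σ| * |f σ - a| = ρε σ * g σ
          rw [abs_of_nonneg (hρε0 σ)]
  -- combine
  set K : ℝ := (2*ε)⁻¹ * ∫ σ in I, |f σ - a| ^ 3 with hKdef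
  have hK0 : 0 ≤ K := by
    refine mul_nonneg (inv_nonneg.2 (by linarith)) ?_
    exact integral_nonneg (fun σ => pow_nonneg (abs_nonneg _) 3)
  have hJK : J ≤ 2 * M * K := by
    have hle : (fun σ => ρε σ * g σ ^ 3) ≤ fun σ => (ε⁻¹ * M) * g σ ^ 3 := fun σ =>
      mul_le_mul_of_nonneg_right (hρεM σ) (pow_nonneg (hg0 σ) 3)
    have := integral_mono (hmul (hgm.pow_const 3) hg3) (hg3.const_mul _) hle
    rw [integral_const_mul] at this
    have heq : (2:ℝ) * M * K = ε⁻¹ * M * ∫ σ in I, g σ ^ 3 := by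
      rw [hKdef]
      have : ∫ σ in I, |f σ - a| ^ 3 = ∫ σ in I, g σ ^ 3 := rfl
      rw [this]
      field_simp
    rw [heq]
    exact this
  have hJ23 : J ^ ((2:ℝ)/3) ≤ (2*M) ^ ((2:ℝ)/3) * K ^ ((2:ℝ)/3) := by
    rw [← Real.mul_rpow (by linarith) hK0]
    exact Real.rpow_le_rpow hJ0 (by linarith [hJK]) (by norm_num)
  have hI1sq : I1 ^ 2 ≤ J ^ ((2:ℝ)/3) := by
    have h1 : |I1| ≤ J ^ ((1:ℝ)/3) := le_trans hI1abs H1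
    have h2 : I1 ^ 2 = |I1| ^ 2 := (sq_abs I1).symm
    have h3 : |I1| ^ 2 ≤ (J ^ ((1:ℝ)/3)) ^ 2 := pow_le_pow_left₀ (abs_nonneg I1) h1 2
    have h4 : (J ^ ((1:ℝ)/3)) ^ (2:ℕ) = J ^ ((2:ℝ)/3) := by
      rw [← Real.rpow_natCast (J ^ ((1:ℝ)/3)) 2, ← Real.rpow_mul hJ0]
      norm_num
    rw [h2]; rw [← h4]; exact h3
  have hI2nn : 0 ≤ ∫ σ in I, ρε σ * g σ ^ 2 :=
    integral_nonneg (fun σ => mul_nonneg (hρε0 σ) (sq_nonneg _))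
  calc |(∫ σ, f σ * ρε σ) ^ 2 - ∫ σ, f σ ^ 2 * ρε σ|
      = |I1 ^ 2 - ∫ σ in I, ρε σ * g σ ^ 2| := by
        rw [e_f, e_f2]; congr 1; ring
    _ ≤ |I1 ^ 2| + |∫ σ in I, ρε σ * g σ ^ 2| := by
        rw [sub_eq_add_neg]; exact (abs_add_le _ _).trans (by rw [abs_neg])
    _ = I1 ^ 2 + ∫ σ in I, ρε σ * g σ ^ 2 := by
        rw [abs_of_nonneg (sq_nonneg _), abs_of_nonneg hI2nn]
    _ ≤ J ^ ((2:ℝ)/3) + J ^ ((2:ℝ)/3) := add_le_add hI1sq H2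
    _ = 2 * J ^ ((2:ℝ)/3) := by ring
    _ ≤ 2 * ((2*M) ^ ((2:ℝ)/3) * K ^ ((2:ℝ)/3)) := by linarith [hJ23]
    _ = (2 * (2*M) ^ ((2:ℝ)/3)) * K ^ ((2:ℝ)/3) := by ring

/-- **Commutator estimate (quadratic term).** There is a constant `C` depending only on
the mollifier `ρ` such that for every open `Ω`, every `v ∈ L³_loc(Ω)` and every `ε > 0`,
for a.e. `(t,s)` at distance `> ε` from `∂Ω`:
`|v_ε(t,s)² − (v²⋆ρ_ε)(t,s)| ≤ C ((2ε)⁻¹ ∫_{−ε}^{ε} |v(t,s−σ) − v(t,s)|³ dσ)^{2/3}`,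
where the convolutions are in the space variable `s` only. -/
theorem statement16 (ρ : ℝ → ℝ) (hρsmooth : ContDiff ℝ (⊤ : ℕ∞) ρ)
    (hρsupp : tsupport ρ ⊆ Ioo (-1) 1) (hρnn : ∀ s, 0 ≤ ρ s) (hρ1 : ∫ s, ρ s = 1) :
    ∃ C : ℝ, ∀ Ω : Set (ℝ × ℝ), IsOpen Ω → ∀ v : ℝ × ℝ → ℝ, Measurable v →
      LocallyIntegrableOn (fun x => |v x| ^ 3) Ω volume →
      ∀ ε : ℝ, 0 < ε →
      ∀ᵐ x ∂(volume.restrict (innerSet Ω ε)),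
        |(∫ σ, v (x.1, x.2 - σ) * (ε⁻¹ * ρ (σ / ε))) ^ 2
            - ∫ σ, (v (x.1, x.2 - σ)) ^ 2 * (ε⁻¹ * ρ (σ / ε))|
          ≤ C * ((2 * ε)⁻¹ * ∫ σ in Ioc (-ε) ε,
              |v (x.1, x.2 - σ) - v x| ^ 3) ^ ((2 : ℝ) / 3) := by
  have hρcont : Continuous ρ := hρsmooth.continuous
  have hρcs : HasCompactSupport ρ :=
    IsCompact.of_isClosed_subset isCompact_Icc (isClosed_tsupport ρ)
      (hρsupp.trans Ioo_subset_Icc_self)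
  obtain ⟨M₀, hM₀⟩ := hρcs.exists_bound_of_continuous hρcont
  set M : ℝ := |M₀| with hMdef
  have hMnn : 0 ≤ M := abs_nonneg _
  have hρM : ∀ s, ρ s ≤ M := fun s =>
    le_trans (le_abs_self _) (le_trans (by simpa [Real.norm_eq_abs] using hM₀ s)
      (le_abs_self _))
  refine ⟨2 * (2*M) ^ ((2:ℝ)/3), ?_⟩
  intro Ω hΩ v hv hloc ε hε
  set P : ℝ × ℝ → Prop := fun x =>
    IntegrableOn (fun s' => |v (x.1, s')| ^ 3) (Icc (x.2 - ε) (x.2 + ε)) with hP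
  have hinnerOpen : IsOpen (innerSet Ω ε) := by
    have h1 : IsOpen {x : ℝ × ℝ | ε < infDist x (frontier Ω)} :=
      isOpen_lt continuous_const (continuous_infDist_pt _)
    exact hΩ.inter h1
  -- local null sets
  have key : ∀ x : ℝ × ℝ, x ∈ innerSet Ω ε →
      ∃ δ : ℝ, 0 < δ ∧ volume {y ∈ ball x δ | ¬ P y} = 0 := by
    intro x hx
    have hxΩ : x ∈ Ω := hx.1
    have hne : Ω ≠ univ := by
      intro h
      have : frontier Ω = ∅ := by rw [h, frontier_univ]
      have h2 := hx.2
      rw [this, infDist_empty] at h2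
      linarith
    obtain ⟨y, hyfr, hyd⟩ := exists_mem_frontier_infDist_compl_eq_dist hxΩ hne
    have hd : ε < infDist x Ωᶜ := by
      rw [hyd]; exact lt_of_lt_of_le hx.2 (infDist_le_dist_of_mem hyfr)
    set δ : ℝ := (infDist x Ωᶜ - ε)/2 with hδdef
    have hδpos : 0 < δ := by rw [hδdef]; linarith
    set T : Set ℝ := Icc (x.1 - δ) (x.1 + δ) with hT
    set S : Set ℝ := Icc (x.2 - ε - δ) (x.2 + ε + δ) with hS
    have hsub : T ×ˢ S ⊆ Ω := by
      intro z hz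
      have h1 : dist z.1 x.1 ≤ ε + δ := by
        rw [Real.dist_eq, abs_le]
        obtain ⟨hz1, hz2⟩ := hz.1
        constructor <;> [skip; skip] <;> · simp only [hT, mem_Icc] at *; linarith
      have h2 : dist z.2 x.2 ≤ ε + δ := by
        rw [Real.dist_eq, abs_le]
        obtain ⟨hz1, hz2⟩ := hz.2
        constructor <;> · simp only [hS, mem_Icc] at *; linarith
      have h3 : dist z x < infDist x Ωᶜ := by
        rw [Prod.dist_eq]
        have : ε + δ < infDist x Ωᶜ := by rw [hδdef]; linarith
        exact lt_of_le_of_lt (max_le h1 h2) this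
      exact ball_infDist_compl_subset (mem_ball.2 h3)
    have hcompact : IsCompact (T ×ˢ S) := isCompact_Icc.prod isCompact_Icc
    have hint : IntegrableOn (fun p => |v p| ^ 3) (T ×ˢ S) volume :=
      hloc.integrableOn_compact_subset hsub hcompact
    have hprod : Integrable (fun p : ℝ × ℝ => |v p| ^ 3)
        ((volume.restrict T).prod (volume.restrict S)) := by
      rw [Measure.prod_restrict]
      rw [← Measure.volume_eq_prod]
      exact hint
    have hae := hprod.prod_right_ae
    rw [ae_iff] at hae
    rw [Measure.restrict_apply' measurableSet_Icc] at hae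
    set N : Set ℝ :=
      {t | ¬ Integrable (fun s' => |v (t, s')| ^ 3) (volume.restrict S)} ∩ T with hN
    set N' : Set ℝ := toMeasurable volume N with hN'
    have hN'0 : volume N' = 0 := by rw [hN', measure_toMeasurable]; exact hae
    refine ⟨δ, hδpos, ?_⟩
    refine measure_mono_null (fun z hz => ?_) (show volume (N' ×ˢ (univ : Set ℝ)) = 0 by
      rw [Measure.volume_eq_prod, Measure.prod_prod, hN'0, zero_mul])
    obtain ⟨hzball, hzP⟩ := hz
    refine ⟨subset_toMeasurable _ _ ⟨?_, ?_⟩, mem_univ _⟩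
    · intro hQ
      apply hzP
      have hsubset : Icc (z.2 - ε) (z.2 + ε) ⊆ S := by
        intro s' hs'
        have hd2 : dist z.2 x.2 < δ := lt_of_le_of_lt (le_max_right _ _)
          (by rw [← Prod.dist_eq]; exact mem_ball.1 hzball)
        rw [Real.dist_eq, abs_lt] at hd2
        simp only [hS, mem_Icc] at *
        constructor <;> linarith [hs'.1, hs'.2]
      exact IntegrableOn.mono_set hQ hsubset
    · have hd1 : dist z.1 x.1 < δ := lt_of_le_of_lt (le_max_left _ _)
        (by rw [← Prod.dist_eq]; exact mem_ball.1 hzball)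
      rw [Real.dist_eq, abs_lt] at hd1
      simp only [hT, mem_Icc]
      constructor <;> linarith
  -- countable subcover and global null set
  have hglobal : volume ({y | ¬ P y} ∩ innerSet Ω ε) = 0 := by
    choose δf hδpos hδnull using fun i : {x // x ∈ innerSet Ω ε} => key i i.2
    obtain ⟨Tc, hTc, hTeq⟩ := TopologicalSpace.isOpen_iUnion_countable
      (fun i : {x // x ∈ innerSet Ω ε} => ball (i : ℝ × ℝ) (δf i))
      (fun i => isOpen_ball)
    refine measure_mono_null (fun y hy => ?_)
      ((measure_biUnion_null_iff hTc).2 (fun i _ => hδnull i) :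
        volume (⋃ i ∈ Tc, {z ∈ ball (i : ℝ × ℝ) (δf i) | ¬ P z}) = 0)
    obtain ⟨hyP, hyIn⟩ := hy
    have : y ∈ ⋃ i : {x // x ∈ innerSet Ω ε}, ball (i : ℝ × ℝ) (δf i) :=
      mem_iUnion.2 ⟨⟨y, hyIn⟩, mem_ball_self (hδpos _)⟩
    rw [← hTeq] at this
    obtain ⟨i, hiT, hyball⟩ := mem_iUnion₂.1 this
    exact mem_iUnion₂.2 ⟨i, hiT, ⟨hyball, hyP⟩⟩
  have hae : ∀ᵐ x ∂(volume.restrict (innerSet Ω ε)), P x := by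
    rw [ae_iff, Measure.restrict_apply' hinnerOpen.measurableSet]
    exact hglobal
  filter_upwards [hae] with x hPx
  -- pointwise estimate
  have hfm : Measurable (fun σ => v (x.1, x.2 - σ)) :=
    hv.comp (measurable_const.prodMk (measurable_const.sub measurable_id))
  have hf3 : IntegrableOn (fun σ => |v (x.1, x.2 - σ)| ^ 3) (Ioc (-ε) ε) := by
    have hemb : MeasurableEmbedding (fun t : ℝ => x.2 - t) :=
      (MeasurableEquiv.subLeft x.2).measurableEmbedding
    have hmp : MeasurePreserving (fun t : ℝ => x.2 - t) volume volume :=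
      Measure.measurePreserving_sub_left volume x.2
    have hpre : (fun σ : ℝ => x.2 - σ) ⁻¹' (Icc (x.2 - ε) (x.2 + ε)) = Icc (-ε) ε := by
      ext σ
      simp only [mem_preimage, mem_Icc]
      constructor <;> intro h <;> constructor <;> linarith [h.1, h.2]
    have h := (hmp.integrableOn_comp_preimage hemb
      (f := fun s' => |v (x.1, s')| ^ 3) (s := Icc (x.2 - ε) (x.2 + ε))).2 hPx
    rw [hpre] at h
    exact (h.mono_set Ioc_subset_Icc_self : IntegrableOn _ _ _)
  exact pointwise_aux hε hMnn ρ hρcont hρnn hρM hρsupp hρ1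
    (fun σ => v (x.1, x.2 - σ)) hfm (v x) hf3
end
end
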